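/- arXiv:2304.13421 — 2 statements merged into one kernel-verified Lean document; each statement's English description precedes it below -/
import Mathlib

section
/- Let T ∈ (0,∞], A > 0, B > 0 and y₀ > 0 satisfy (A/2)·y₀² ≥ B. Let φ : [0,T) → ℝ be continuous on [0,T), differentiable on (0,T), with φ(0) > y₀ and φ'(t) ≥ A·φ(t)² − B for all t ∈ (0,T). Then φ(t) ≥ y₀ for all t ∈ [0,T) and φ'(t) ≥ (A/2)·φ(t)² for all t ∈ (0,T). -/
open MeasureTheory Real Set Filter Topology
open scoped ENNReal

/-- if φ' ≥ Aφ² − B, φ(0) > y₀ and (A/2)y₀² ≥ B, then φ stays ≥ y₀ and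
satisfies φ' ≥ (A/2)φ². -/
theorem statement15 (T : ℝ≥0∞) (hT : 0 < T) (A B y₀ : ℝ) (hA : 0 < A) (hB : 0 < B)
    (hy₀ : 0 < y₀) (hAB : B ≤ A / 2 * y₀^2) (φ : ℝ → ℝ)
    (hcont : ContinuousOn φ {t : ℝ | 0 ≤ t ∧ ENNReal.ofReal t < T})
    (hdiff : ∀ t : ℝ, 0 < t → ENNReal.ofReal t < T → DifferentiableAt ℝ φ t)
    (hineq : ∀ t : ℝ, 0 < t → ENNReal.ofReal t < T → A * (φ t)^2 - B ≤ deriv φ t)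
    (hφ0 : y₀ < φ 0) :
    (∀ t : ℝ, 0 ≤ t → ENNReal.ofReal t < T → y₀ ≤ φ t) ∧
    (∀ t : ℝ, 0 < t → ENNReal.ofReal t < T → A / 2 * (φ t)^2 ≤ deriv φ t) := by
  have hlower : ∀ t : ℝ, 0 ≤ t → ENNReal.ofReal t < T → y₀ ≤ φ t := by
    intro t₁ ht₁0 ht₁T
    by_contra hlt
    push_neg at hlt
    -- t₁ > 0
    have ht₁pos : 0 < t₁ := by
      rcases ht₁0.lt_or_eq with h | h
      · exact h
      · exact absurd hlt (by rw [← h]; linarith)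
    have hsub : Icc (0:ℝ) t₁ ⊆ {t : ℝ | 0 ≤ t ∧ ENNReal.ofReal t < T} := by
      intro x hx
      exact ⟨hx.1, lt_of_le_of_lt (ENNReal.ofReal_le_ofReal hx.2) ht₁T⟩
    have hcont' : ContinuousOn φ (Icc 0 t₁) := hcont.mono hsub
    set K : Set ℝ := {t ∈ Icc (0:ℝ) t₁ | φ t ≤ y₀} with hK
    have hKclosed : IsClosed K := by
      have := hcont'.preimage_isClosed_of_isClosed isClosed_Icc (isClosed_Iic (a := y₀))
      exact this
    have hKcompact : IsCompact K :=
      isCompact_Icc.of_isClosed_subset hKclosed (fun x hx => hx.1)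
    have hKne : K.Nonempty := ⟨t₁, ⟨ht₁0, le_rfl⟩, hlt.le⟩
    have hsmem : sInf K ∈ K := hKcompact.sInf_mem hKne
    set s := sInf K with hs
    obtain ⟨⟨hs0, hst₁⟩, hφs⟩ := hsmem
    have hspos : 0 < s := by
      rcases hs0.lt_or_eq with h | h
      · exact h
      · exfalso; rw [← h] at hφs; linarith
    -- for t < s in [0,t₁], φ t > y₀
    have hbefore : ∀ t, t ∈ Icc (0:ℝ) t₁ → t < s → y₀ < φ t := by
      intro t ht hts
      by_contra h
      push_neg at h
      have : t ∈ K := ⟨ht, h⟩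
      exact absurd (csInf_le hKcompact.bddBelow this) (not_le.mpr hts)
    -- φ strictly monotone on [0,s]
    have hmono : StrictMonoOn φ (Icc 0 s) := by
      apply strictMonoOn_of_deriv_pos (convex_Icc 0 s)
      · exact hcont'.mono (Icc_subset_Icc le_rfl hst₁)
      · intro t ht
        rw [interior_Icc] at ht
        have htmem : t ∈ Icc (0:ℝ) t₁ := ⟨ht.1.le, ht.2.le.trans hst₁⟩
        have hφt : y₀ < φ t := hbefore t htmem ht.2
        have htT : ENNReal.ofReal t < T := (hsub htmem).2
        have h1 := hineq t ht.1 htT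
        have h2 : A * y₀^2 ≤ A * (φ t)^2 :=
          mul_le_mul_of_nonneg_left (pow_le_pow_left₀ hy₀.le hφt.le 2) hA.le
        nlinarith [sq_nonneg y₀]
    have : φ 0 < φ s := hmono ⟨le_rfl, hspos.le⟩ ⟨hspos.le, le_rfl⟩ hspos
    linarith
  refine ⟨hlower, fun t ht htT => ?_⟩
  have hφt := hlower t ht.le htT
  have h1 := hineq t ht htT
  have h2 : A / 2 * y₀^2 ≤ A / 2 * (φ t)^2 :=
    mul_le_mul_of_nonneg_left (pow_le_pow_left₀ hy₀.le hφt 2) (by linarith)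
  linarith
end

section
/- Let n ≥ 1 be an integer, R > 0, Ω = B_R(0) ⊂ ℝⁿ, b ∈ (1,2), s₀ ∈ (0,Rⁿ), M̃₀ > 0, and set r₀ := (s₀/4)^{1/n}. Let u₀ ∈ C⁰(Ω̄) be nonnegative and radially symmetric, written u₀ = u₀(ρ) with ρ = |x|, and assume ∫_{B_{r₀}(0)} u₀(x) dx ≥ M̃₀. Define U(s) := ∫₀^{s^{1/n}} ρ^{n−1} u₀(ρ) dρ for s ∈ [0,Rⁿ]. Then ∫₀^{s₀} s^{−b}(s₀−s) U(s) ds > (2^{b−3} M̃₀ / ω_n) · s₀^{2−b}, where ω_n denotes the (n−1)-dimensional surface area of the unit sphere in ℝⁿ. -/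
/-!
Put `U(s) = ∫₀^{s^{1/n}} ρ^{n-1} u₀(ρ) dρ`, so that `ω_n U(s)` is the mass of `u₀` in the ball of
radius `s^{1/n}`. As `u₀ ≥ 0`, `U` is nondecreasing, hence `U ≥ M̃₀ / ω_n` on `[s₀/4, s₀]`. On
`[s₀/4, s₀/2]` the weight `s^{-b} (s₀ - s)` is at least `(s₀/2)^{1-b}`, strictly so at `s₀/4`, and
integrating over this interval of length `s₀/4` gives the bound. The integral is a genuine one:
`u₀` is bounded, so `U(s) = O(s)` and the integrand is `O(s^{1-b})` with `b < 2`.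
-/

open MeasureTheory Real Set Filter Topology
open scoped ENNReal

noncomputable section

/-- Euclidean space ℝⁿ. -/
abbrev Euc (n : ℕ) := EuclideanSpace ℝ (Fin n)

/-- The domain Ω = B_R(0) ⊂ ℝⁿ. -/
def Omega (n : ℕ) (R : ℝ) : Set (Euc n) := Metric.ball 0 R

/-- A unit coordinate vector in ℝⁿ. -/
def e1 (n : ℕ) : Euc n := if h : 0 < n then EuclideanSpace.single (⟨0, h⟩ : Fin n) 1 else 0

/-- The (n−1)-dimensional surface area of the unit sphere in ℝⁿ, i.e. n · |B₁(0)|. -/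
def omegaN (n : ℕ) : ℝ := (n : ℝ) * (volume (Metric.ball (0 : Euc n) 1)).toReal

lemma norm_e1 {n : ℕ} (hn : 1 ≤ n) : ‖e1 n‖ = 1 := by
  simp [e1, dif_pos (show 0 < n from hn)]

lemma norm_smul_e1 {n : ℕ} (hn : 1 ≤ n) {ρ : ℝ} (hρ : 0 ≤ ρ) : ‖ρ • e1 n‖ = ρ := by
  rw [norm_smul, norm_e1 hn, mul_one, norm_of_nonneg hρ]

lemma omegaN_pos {n : ℕ} (hn : 1 ≤ n) : 0 < omegaN n :=
  mul_pos (Nat.cast_pos.2 hn)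
    (ENNReal.toReal_pos (Metric.measure_ball_pos volume 0 one_pos).ne' measure_ball_lt_top.ne)

theorem setIntegral_ball_eq_omegaN_mul {n : ℕ} (hn : 1 ≤ n) {u : Euc n → ℝ} {v : Euc n}
    {r : ℝ} (hr : 0 ≤ r) (hu : ∀ x ∈ Metric.ball (0 : Euc n) r, u x = u (‖x‖ • v)) :
    ∫ x in Metric.ball (0 : Euc n) r, u x
      = omegaN n * ∫ ρ in (0:ℝ)..r, ρ ^ ((n:ℝ) - 1) * u (ρ • v) := by
  set F : ℝ → ℝ := (Iio r).indicator fun ρ => u (ρ • v)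
  have hF : (Metric.ball (0 : Euc n) r).indicator u = fun x => F ‖x‖ := by
    ext x
    by_cases hx : ‖x‖ < r
    · simp [F, hx, hu x (mem_ball_zero_iff.2 hx)]
    · simp [F, hx]
  have hpow : ∀ ρ : ℝ, ρ ^ ((n:ℝ) - 1) = ρ ^ (n - 1) := fun ρ => by
    rw [← Real.rpow_natCast, Nat.cast_sub hn, Nat.cast_one]
  have : Nonempty (Fin n) := ⟨⟨0, hn⟩⟩
  rw [← integral_indicator measurableSet_ball, hF, integral_fun_norm_addHaar,
    finrank_euclideanSpace_fin, intervalIntegral.integral_of_le hr,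
    integral_Ioc_eq_integral_Ioo, ← Ioi_inter_Iio, ← setIntegral_indicator measurableSet_Iio]
  simp only [F, smul_eq_mul, nsmul_eq_mul, hpow, omegaN, measureReal_def, mul_assoc,
    indicator_mul_right]

def radialMass (n : ℕ) (f : ℝ → ℝ) (s : ℝ) : ℝ :=
  ∫ ρ in (0:ℝ)..s ^ (n:ℝ)⁻¹, ρ ^ ((n:ℝ) - 1) * f ρ

section RadialMass

variable {n : ℕ} {f : ℝ → ℝ} {R : ℝ}

lemma rpow_inv_natCast_mem_Icc (hn : 1 ≤ n) (hR : 0 ≤ R) {s : ℝ} (hs : s ∈ Icc 0 (R ^ n)) :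
    s ^ (n:ℝ)⁻¹ ∈ Icc 0 R :=
  ⟨rpow_nonneg hs.1 _, (rpow_inv_le_iff_of_pos hs.1 hR (by positivity)).2 <| by
    rw [rpow_natCast]; exact hs.2⟩

lemma continuousOn_rpow_sub_one_mul (hn : 1 ≤ n) (hf : ContinuousOn f (Icc 0 R)) :
    ContinuousOn (fun ρ => ρ ^ ((n:ℝ) - 1) * f ρ) (Icc 0 R) :=
  (continuous_rpow_const (by simpa using hn)).continuousOn.mul hf

lemma radialMass_zero (hn : 1 ≤ n) : radialMass n f 0 = 0 := by
  simp [radialMass, zero_rpow (inv_ne_zero (Nat.cast_ne_zero.2 (Nat.one_le_iff_ne_zero.1 hn)))]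

lemma monotoneOn_radialMass (hn : 1 ≤ n) (hR : 0 ≤ R) (hfc : ContinuousOn f (Icc 0 R))
    (hf0 : ∀ ρ ∈ Icc 0 R, 0 ≤ f ρ) : MonotoneOn (radialMass n f) (Icc 0 (R ^ n)) := by
  intro s hs t ht hst
  have hσs := rpow_inv_natCast_mem_Icc hn hR hs
  have hσt := rpow_inv_natCast_mem_Icc hn hR ht
  refine intervalIntegral.integral_mono_interval le_rfl hσs.1
    (rpow_le_rpow hs.1 hst (by positivity)) ?_
    ((continuousOn_rpow_sub_one_mul hn hfc).mono
      (uIcc_subset_Icc ⟨le_rfl, hR⟩ hσt)).intervalIntegrable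
  filter_upwards [ae_restrict_mem measurableSet_Ioc] with ρ hρ
  exact mul_nonneg (rpow_nonneg hρ.1.le _) (hf0 ρ ⟨hρ.1.le, hρ.2.trans hσt.2⟩)

lemma radialMass_nonneg (hn : 1 ≤ n) (hR : 0 ≤ R) (hfc : ContinuousOn f (Icc 0 R))
    (hf0 : ∀ ρ ∈ Icc 0 R, 0 ≤ f ρ) {s : ℝ} (hs : s ∈ Icc 0 (R ^ n)) : 0 ≤ radialMass n f s :=
  radialMass_zero hn ▸
    monotoneOn_radialMass hn hR hfc hf0 ⟨le_rfl, pow_nonneg hR n⟩ hs hs.1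

lemma continuousOn_radialMass (hn : 1 ≤ n) (hR : 0 ≤ R) (hfc : ContinuousOn f (Icc 0 R)) :
    ContinuousOn (radialMass n f) (Icc 0 (R ^ n)) := by
  have hprim := intervalIntegral.continuousOn_primitive_interval (a := 0) (b := R)
    (μ := volume) (f := fun ρ => ρ ^ ((n:ℝ) - 1) * f ρ)
    (by rw [uIcc_of_le hR]; exact (continuousOn_rpow_sub_one_mul hn hfc).integrableOn_Icc)
  rw [uIcc_of_le hR] at hprim
  exact hprim.comp (continuous_rpow_const (by positivity)).continuousOn
    fun s hs => rpow_inv_natCast_mem_Icc hn hR hs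

lemma radialMass_le (hn : 1 ≤ n) (hR : 0 ≤ R) (hfc : ContinuousOn f (Icc 0 R)) {M : ℝ}
    (hM : ∀ ρ ∈ Icc 0 R, f ρ ≤ M) {s : ℝ} (hs : s ∈ Icc 0 (R ^ n)) :
    radialMass n f s ≤ M / n * s := by
  have hσ := rpow_inv_natCast_mem_Icc hn hR hs
  have hn0 : (n:ℝ) ≠ 0 := Nat.cast_ne_zero.2 (Nat.one_le_iff_ne_zero.1 hn)
  have hn1 : (-1:ℝ) < n - 1 := by linarith [(Nat.one_le_cast (α := ℝ)).2 hn]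
  calc radialMass n f s ≤ ∫ ρ in (0:ℝ)..s ^ (n:ℝ)⁻¹, M * ρ ^ ((n:ℝ) - 1) := by
        refine intervalIntegral.integral_mono_on hσ.1
          ((continuousOn_rpow_sub_one_mul hn hfc).mono
            (uIcc_subset_Icc ⟨le_rfl, hR⟩ hσ)).intervalIntegrable
          ((intervalIntegral.intervalIntegrable_rpow' hn1).const_mul M) fun ρ hρ => ?_
        rw [mul_comm M]
        exact mul_le_mul_of_nonneg_left (hM ρ ⟨hρ.1, hρ.2.trans hσ.2⟩) (rpow_nonneg hρ.1 _)
    _ = M / n * s := by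
        rw [intervalIntegral.integral_const_mul, integral_rpow (Or.inl hn1),
          sub_add_cancel, zero_rpow hn0, ← rpow_mul hs.1, inv_mul_cancel₀ hn0, rpow_one]
        ring

end RadialMass

section WeightedIntegral

variable {U : ℝ → ℝ} {b s₀ : ℝ}

lemma intervalIntegrable_rpow_neg_mul_sub_mul (hb : b < 2) (hs₀ : 0 < s₀)
    (hUcont : ContinuousOn U (Ioc 0 s₀)) (hU0 : ∀ s ∈ Ioc 0 s₀, 0 ≤ U s) {C : ℝ}
    (hUle : ∀ s ∈ Ioc 0 s₀, U s ≤ C * s) :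
    IntervalIntegrable (fun s => s ^ (-b) * (s₀ - s) * U s) volume 0 s₀ := by
  have hcont : ContinuousOn (fun s => s ^ (-b) * (s₀ - s) * U s) (Ioc 0 s₀) :=
    ((continuousOn_id.rpow_const fun s hs => Or.inl hs.1.ne').mul
      (continuousOn_const.sub continuousOn_id)).mul hUcont
  rw [intervalIntegrable_iff_integrableOn_Ioc_of_le hs₀.le]
  have hdom : IntegrableOn (fun s => C * s₀ * s ^ (1 - b)) (Ioc 0 s₀) := by
    rw [← intervalIntegrable_iff_integrableOn_Ioc_of_le hs₀.le]
    exact (intervalIntegral.intervalIntegrable_rpow' (by linarith)).const_mul _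
  refine hdom.mono' (hcont.aestronglyMeasurable measurableSet_Ioc) ?_
  filter_upwards [ae_restrict_mem measurableSet_Ioc] with s hs
  have hpow : C * s₀ * s ^ (1 - b) = s ^ (-b) * (s₀ * (C * s)) := by
    rw [sub_eq_neg_add, rpow_add hs.1, rpow_one]; ring
  have hw : 0 ≤ s ^ (-b) := rpow_nonneg hs.1.le _
  have hU := hU0 s hs
  have hUs := hUle s hs
  rw [norm_of_nonneg (mul_nonneg (mul_nonneg hw (by linarith [hs.2])) hU), hpow, mul_assoc]
  gcongr
  nlinarith [hs.1]

lemma quarter_mul_half_rpow (hs₀ : 0 < s₀) :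
    s₀ / 4 * ((s₀ / 2) ^ (-b) * (s₀ / 2)) = 2 ^ (b - 3) * s₀ ^ (2 - b) := by
  rw [div_rpow hs₀.le zero_le_two, rpow_neg zero_le_two, rpow_neg hs₀.le, rpow_sub two_pos,
    rpow_sub hs₀, rpow_two, show (2:ℝ) ^ (3:ℝ) = 8 by norm_num]
  field_simp
  ring

theorem lt_integral_rpow_neg_mul_sub_mul (hb0 : 0 ≤ b) (hb2 : b < 2) (hs₀ : 0 < s₀) {c C : ℝ}
    (hc : 0 < c) (hUcont : ContinuousOn U (Ioc 0 s₀)) (hU0 : ∀ s ∈ Ioc 0 s₀, 0 ≤ U s)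
    (hUle : ∀ s ∈ Ioc 0 s₀, U s ≤ C * s) (hUge : ∀ s ∈ Icc (s₀ / 4) (s₀ / 2), c ≤ U s) :
    2 ^ (b - 3) * c * s₀ ^ (2 - b) < ∫ s in (0:ℝ)..s₀, s ^ (-b) * (s₀ - s) * U s := by
  set g := fun s => s ^ (-b) * (s₀ - s) * U s
  set K := (s₀ / 2) ^ (-b) * (s₀ / 2)
  have hsub : Icc (s₀ / 4) (s₀ / 2) ⊆ Ioc 0 s₀ := Icc_subset_Ioc (by linarith) (by linarith)
  have hgc : ContinuousOn g (Icc (s₀ / 4) (s₀ / 2)) :=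
    ((continuousOn_id.rpow_const fun s hs => Or.inl (hsub hs).1.ne').mul
      (continuousOn_const.sub continuousOn_id)).mul (hUcont.mono hsub)
  have hK0 : 0 ≤ K := mul_nonneg (rpow_nonneg (by linarith) _) (by linarith)
  have hweight : ∀ s ∈ Icc (s₀ / 4) (s₀ / 2), K ≤ s ^ (-b) * (s₀ - s) := fun s hs =>
    mul_le_mul (rpow_le_rpow_of_nonpos (by linarith [hs.1]) hs.2 (by linarith))
      (by linarith [hs.2]) (by linarith) (rpow_nonneg (by linarith [hs.1]) _)
  have hweight_lt : K < (s₀ / 4) ^ (-b) * (s₀ - s₀ / 4) :=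
    mul_lt_mul' (rpow_le_rpow_of_nonpos (by linarith) (by linarith) (by linarith))
      (by linarith) (by linarith) (rpow_pos_of_pos (by linarith) _)
  have hmid : ∫ s in (s₀ / 4)..(s₀ / 2), c * K < ∫ s in (s₀ / 4)..(s₀ / 2), g s := by
    refine intervalIntegral.integral_lt_integral_of_continuousOn_of_le_of_exists_lt
      (by linarith) continuousOn_const hgc (fun s hs => ?_) ⟨s₀ / 4, ?_, ?_⟩
    · have hs' : s ∈ Icc (s₀ / 4) (s₀ / 2) := Ioc_subset_Icc_self hs
      calc c * K ≤ U s * (s ^ (-b) * (s₀ - s)) :=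
            mul_le_mul (hUge s hs') (hweight s hs') hK0 (hU0 s (hsub hs'))
        _ = g s := by ring
    · exact ⟨le_rfl, by linarith⟩
    · have hs' : s₀ / 4 ∈ Icc (s₀ / 4) (s₀ / 2) := ⟨le_rfl, by linarith⟩
      calc c * K < c * ((s₀ / 4) ^ (-b) * (s₀ - s₀ / 4)) := mul_lt_mul_of_pos_left hweight_lt hc
        _ ≤ U (s₀ / 4) * ((s₀ / 4) ^ (-b) * (s₀ - s₀ / 4)) :=
            mul_le_mul_of_nonneg_right (hUge _ hs') (hK0.trans (hweight _ hs'))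
        _ = g (s₀ / 4) := by ring
  have hmono : ∫ s in (s₀ / 4)..(s₀ / 2), g s ≤ ∫ s in (0:ℝ)..s₀, g s :=
    intervalIntegral.integral_mono_interval (by linarith) (by linarith) (by linarith)
      (by filter_upwards [ae_restrict_mem measurableSet_Ioc] with s hs
          exact mul_nonneg (mul_nonneg (rpow_nonneg hs.1.le _) (by linarith [hs.2])) (hU0 s hs))
      (intervalIntegrable_rpow_neg_mul_sub_mul hb2 hs₀ hUcont hU0 hUle)
  calc 2 ^ (b - 3) * c * s₀ ^ (2 - b) = ∫ s in (s₀ / 4)..(s₀ / 2), c * K := by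
        rw [intervalIntegral.integral_const, smul_eq_mul, mul_right_comm,
          ← quarter_mul_half_rpow hs₀]
        ring
    _ < ∫ s in (s₀ / 4)..(s₀ / 2), g s := hmid
    _ ≤ ∫ s in (0:ℝ)..s₀, g s := hmono

end WeightedIntegral

/-- lower bound of the moment functional at the initial time
(cf. [W-2018, (5.5)]). -/
theorem statement18 (n : ℕ) (hn : 1 ≤ n) (R : ℝ) (hR : 0 < R)
    (b s₀ M₀' : ℝ) (hb : b ∈ Set.Ioo (1:ℝ) 2) (hs₀ : s₀ ∈ Set.Ioo (0:ℝ) (R ^ n))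
    (hM₀' : 0 < M₀')
    (u₀ : Euc n → ℝ) (hu₀c : ContinuousOn u₀ (closure (Omega n R)))
    (hu₀0 : ∀ x ∈ closure (Omega n R), 0 ≤ u₀ x)
    (hrad : ∀ x ∈ closure (Omega n R), ∀ y ∈ closure (Omega n R), ‖x‖ = ‖y‖ → u₀ x = u₀ y)
    (hint : M₀' ≤ (∫ x in Metric.ball (0 : Euc n) ((s₀ / 4) ^ ((n:ℝ)⁻¹)), u₀ x)) :
    (2:ℝ) ^ (b - 3) * M₀' / omegaN n * s₀ ^ (2 - b)
      < ∫ s in (0:ℝ)..s₀, s ^ (-b) * (s₀ - s)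
          * (∫ ρ in (0:ℝ)..(s ^ ((n:ℝ)⁻¹)), ρ ^ ((n:ℝ) - 1) * u₀ (ρ • e1 n)) := by
  obtain ⟨hb1, hb2⟩ := hb
  obtain ⟨hs0, hsR⟩ := hs₀
  have hclosure : closure (Omega n R) = Metric.closedBall 0 R := closure_ball 0 hR.ne'
  set f : ℝ → ℝ := fun ρ => u₀ (ρ • e1 n)
  have hmaps : MapsTo (· • e1 n) (Icc 0 R) (closure (Omega n R)) := fun ρ hρ => by
    rw [hclosure, mem_closedBall_zero_iff, norm_smul_e1 hn hρ.1]
    exact hρ.2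
  have hfc : ContinuousOn f (Icc 0 R) :=
    hu₀c.comp (continuous_id.smul continuous_const).continuousOn hmaps
  have hf0 : ∀ ρ ∈ Icc 0 R, 0 ≤ f ρ := fun ρ hρ => hu₀0 _ (hmaps hρ)
  obtain ⟨M, hM⟩ := isCompact_Icc.exists_bound_of_continuousOn hfc
  have hquarter : s₀ / 4 ∈ Icc 0 (R ^ n) := ⟨by linarith, by linarith⟩
  have hmass : M₀' / omegaN n ≤ radialMass n f (s₀ / 4) := by
    obtain ⟨hr0, hrR⟩ := rpow_inv_natCast_mem_Icc hn hR.le hquarter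
    rw [div_le_iff₀' (omegaN_pos hn)]
    refine hint.trans_eq (setIntegral_ball_eq_omegaN_mul hn hr0 fun x hx => ?_)
    have hxR : ‖x‖ ∈ Icc 0 R := ⟨norm_nonneg x, (mem_ball_zero_iff.1 hx).le.trans hrR⟩
    exact hrad x (by rw [hclosure]; exact mem_closedBall_zero_iff.2 hxR.2) _ (hmaps hxR)
      (norm_smul_e1 hn hxR.1).symm
  have hIoc : Ioc 0 s₀ ⊆ Icc 0 (R ^ n) := fun s hs => ⟨hs.1.le, hs.2.trans hsR.le⟩
  rw [mul_div_assoc]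
  exact lt_integral_rpow_neg_mul_sub_mul (by linarith) hb2 hs0 (div_pos hM₀' (omegaN_pos hn))
    ((continuousOn_radialMass hn hR.le hfc).mono hIoc)
    (fun s hs => radialMass_nonneg hn hR.le hfc hf0 (hIoc hs))
    (fun s hs => radialMass_le hn hR.le hfc (fun ρ hρ => (le_abs_self _).trans (hM ρ hρ))
      (hIoc hs))
    (fun s hs => hmass.trans (monotoneOn_radialMass hn hR.le hfc hf0 hquarter
      (hIoc ⟨by linarith [hs.1], by linarith [hs.2]⟩) hs.1))
end
end
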